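/- arXiv:cs/0101003 — 2 statements merged into one kernel-verified Lean document; each statement's English description precedes it below -/
import Mathlib

section
/- Let D > 0 and let (u, v) ∈ ℝ² with u² + v² = 1. Define b_t(ξ_x, ξ_y) = (2/3)·[cos(2πD·ξ_x) + cos(2πD·(ξ_x/2 + (√3/2)·ξ_y)) + cos(2πD·(ξ_x/2 − (√3/2)·ξ_y))]. Then the dispersion ratio of the triangular waveguide mesh along the direction (u, v) tends to 1/√2 at dc: the function t ↦ (1/(2πD·t))·arctan(√(4 − b_t(t·u, t·v)²)/b_t(t·u, t·v)) tends to 1/√2 as t → 0⁺. -/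
open Real Filter Topology

/-!
Along the ray `t ↦ (t u, t v)` one has `2 - b_t = (2/3) Σᵢ (1 - cos (2πD wᵢ t))`, where the `wᵢ` are
the components of `(u, v)` along the three mesh directions; since `Σᵢ wᵢ² = (3/2)(u² + v²) = 3/2`,
`2 - b_t ∼ (2πD t)² / 2`. Then `√(4 - b_t²) / b_t ∼ 2πD t / √2`, and `arctan x ∼ x` at `0`.
-/

theorem tendsto_comp_div_of_hasDerivAt_zero {α : Type*} {l : Filter α} {f : ℝ → ℝ} {f' : ℝ}
    (hf : HasDerivAt f f' 0) (hf0 : f 0 = 0) {g s : α → ℝ} {L : ℝ}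
    (hg : Tendsto g l (𝓝 0)) (hgs : Tendsto (fun x => g x / s x) l (𝓝 L)) :
    Tendsto (fun x => f (g x) / s x) l (𝓝 (f' * L)) := by
  -- `f (g x) = g x * dslope f 0 (g x)` holds even where `g x = 0`.
  have hslope : Tendsto (fun x => dslope f 0 (g x)) l (𝓝 f') := by
    have := (continuousAt_dslope_same.2 hf.differentiableAt).tendsto.comp hg
    rwa [dslope_same, hf.deriv] at this
  refine (hslope.mul hgs).congr fun x => ?_
  have := sub_smul_dslope f 0 (g x)
  rw [hf0, sub_zero, sub_zero, smul_eq_mul] at this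
  rw [← this]
  ring

theorem tendsto_one_sub_cos_mul_div_sq (a : ℝ) :
    Tendsto (fun t => (1 - cos (a * t)) / t ^ 2) (𝓝[≠] 0) (𝓝 (a ^ 2 / 2)) := by
  have hsin : Tendsto (fun t => sin (a / 2 * t) / t) (𝓝[≠] 0) (𝓝 (cos 0 * (a / 2))) := by
    refine tendsto_comp_div_of_hasDerivAt_zero (g := fun t => a / 2 * t) (s := fun t => t)
      (hasDerivAt_sin 0) sin_zero ?_ ?_
    · exact tendsto_nhdsWithin_of_tendsto_nhds ((continuous_const_mul _).tendsto' 0 0 (mul_zero _))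
    · refine tendsto_const_nhds.congr' ?_
      filter_upwards [self_mem_nhdsWithin] with t (ht : t ≠ 0)
      field_simp
  convert (hsin.pow 2).const_mul 2 using 1
  · ext t
    rw [show a * t = 2 * (a / 2 * t) by ring, cos_two_mul_eq_one_sub, div_pow]
    ring
  · rw [cos_zero]
    congr 1
    ring

theorem tendsto_arctan_sqrt_four_sub_sq_div {B : ℝ → ℝ} {a : ℝ}
    (h : Tendsto (fun t => (2 - B t) / t ^ 2) (𝓝[>] 0) (𝓝 a)) :
    Tendsto (fun t => arctan (√(4 - B t ^ 2) / B t) / t) (𝓝[>] 0) (𝓝 √a) := by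
  have hsq : Tendsto (fun t : ℝ => t ^ 2) (𝓝[>] 0) (𝓝 0) :=
    tendsto_nhdsWithin_of_tendsto_nhds ((continuous_pow 2).tendsto' 0 0 (zero_pow two_ne_zero))
  have hB : Tendsto B (𝓝[>] 0) (𝓝 2) := by
    have := tendsto_const_nhds (x := (2 : ℝ)) |>.sub (h.mul hsq)
    rw [mul_zero, sub_zero] at this
    refine this.congr' ?_
    filter_upwards [self_mem_nhdsWithin] with t (ht : 0 < t)
    rw [div_mul_cancel₀ _ (pow_ne_zero 2 ht.ne'), sub_sub_cancel]
  have hroot : Tendsto (fun t => √(4 - B t ^ 2) / t) (𝓝[>] 0) (𝓝 (2 * √a)) := by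
    have := (h.mul (hB.const_add 2)).sqrt
    rw [show a * (2 + 2) = 2 ^ 2 * a by ring, sqrt_mul (by positivity), sqrt_sq zero_le_two] at this
    refine this.congr' ?_
    filter_upwards [self_mem_nhdsWithin] with t (ht : 0 < t)
    rw [div_mul_eq_mul_div, sqrt_div' _ (sq_nonneg t), sqrt_sq ht.le]
    ring_nf
  have hnum : Tendsto (fun t => √(4 - B t ^ 2)) (𝓝[>] 0) (𝓝 0) := by
    simpa [show (4 : ℝ) - 2 ^ 2 = 0 by norm_num] using ((hB.pow 2).const_sub 4).sqrt
  have := tendsto_comp_div_of_hasDerivAt_zero (g := fun t => √(4 - B t ^ 2) / B t)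
    (s := fun t => t) (hasDerivAt_arctan 0) arctan_zero
    (by simpa [Pi.div_def] using hnum.div hB two_ne_zero)
    (hroot.div hB two_ne_zero |>.congr fun t => by simp only [Pi.div_apply]; ring)
  convert this using 2
  simp

noncomputable def triangularMeshFactor (D ξx ξy : ℝ) : ℝ :=
  2 / 3 * (cos (2 * π * D * ξx) + cos (2 * π * D * (ξx / 2 + √3 / 2 * ξy)) +
    cos (2 * π * D * (ξx / 2 - √3 / 2 * ξy)))

theorem tendsto_two_sub_triangularMeshFactor_div_sq (D u v : ℝ) :
    Tendsto (fun t => (2 - triangularMeshFactor D (t * u) (t * v)) / t ^ 2) (𝓝[≠] 0)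
      (𝓝 ((2 * π * D) ^ 2 * (u ^ 2 + v ^ 2) / 2)) := by
  set c := 2 * π * D
  set w₁ := u / 2 + √3 / 2 * v
  set w₂ := u / 2 - √3 / 2 * v
  have H := (((tendsto_one_sub_cos_mul_div_sq (c * u)).add
    (tendsto_one_sub_cos_mul_div_sq (c * w₁))).add
      (tendsto_one_sub_cos_mul_div_sq (c * w₂))).const_mul (2 / 3)
  convert H using 1
  · funext t
    rw [triangularMeshFactor, show c * (t * u) = c * u * t by ring,
      show c * (t * u / 2 + √3 / 2 * (t * v)) = c * w₁ * t by ring,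
      show c * (t * u / 2 - √3 / 2 * (t * v)) = c * w₂ * t by ring]
    ring
  · congr 1
    linear_combination (-c ^ 2 * v ^ 2 / 6) * sq_sqrt (zero_le_three (α := ℝ))

/-- The dispersion ratio of the triangular waveguide mesh along any unit direction `(u, v)`
tends to `1/√2` at dc. -/
theorem stmt7 (D u v : ℝ) (hD : 0 < D) (huv : u ^ 2 + v ^ 2 = 1)
    (b : ℝ → ℝ → ℝ)
    (hb : ∀ ξx ξy, b ξx ξy = (2 / 3) * (Real.cos (2 * π * D * ξx) +
      Real.cos (2 * π * D * (ξx / 2 + Real.sqrt 3 / 2 * ξy)) +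
      Real.cos (2 * π * D * (ξx / 2 - Real.sqrt 3 / 2 * ξy)))) :
    Filter.Tendsto (fun t : ℝ => (1 / (2 * π * D * t)) *
        Real.arctan (Real.sqrt (4 - (b (t * u) (t * v)) ^ 2) / b (t * u) (t * v)))
      (nhdsWithin 0 (Set.Ioi 0)) (nhds (1 / Real.sqrt 2)) := by
  obtain rfl : b = triangularMeshFactor D := funext₂ hb
  have hc : 0 < 2 * π * D := by positivity
  have h2 := (tendsto_two_sub_triangularMeshFactor_div_sq D u v).mono_left
    (nhdsWithin_mono 0 fun t (ht : 0 < t) => ht.ne')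
  rw [huv, mul_one] at h2
  convert (tendsto_arctan_sqrt_four_sub_sq_div h2).const_mul (1 / (2 * π * D)) using 1
  · funext t
    ring
  · congr 1
    rw [sqrt_div' _ zero_le_two, sqrt_sq hc.le]
    field_simp
end

section
/- Let B > 0, let D = 1/(2B) be the reference (critical square) waveguide length, and let D_t = 1/(√3·B) be the critical waveguide length of the triangular mesh. Let (u, v) ∈ ℝ² with u² + v² = 1, and define b̃_t(ξ_x, ξ_y) = (2/3)·[cos(2πD_t·ξ_x) + cos(2πD_t·(ξ_x/2 + (√3/2)·ξ_y)) + cos(2πD_t·(ξ_x/2 − (√3/2)·ξ_y))]. Then the function t ↦ (1/(2πD·t))·arctan(√(4 − b̃_t(t·u, t·v)²)/b̃_t(t·u, t·v)) tends to √2/√3 as t → 0⁺; that is, under critical sampling the dc dispersion ratio of the triangular waveguide mesh is k̃_t(0) = √2/√3. -/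
/-! Since `1 - cos x = (x² / 2) · sinc (x / 2)²`, the quotient `(2 - b̃_t(t u, t v)) / t²` is a
continuous function of `t`, with value `(2π D_t)² / 2` at `0` because the squared projections
of the unit vector `(u, v)` on the three lattice directions `(1, 0)`, `(1/2, ±√3/2)` sum to `3/2`.
Hence
`√(4 - b̃_t²) / b̃_t ~ (2π D_t / √2) t`, and as `arctan x ~ x` at `0` the ratio tends to
`D_t / (√2 D) = √2 / √3`. -/

open Real Filter Topology Asymptotics

lemma Real.one_sub_cos_eq_sq_mul_sinc_sq (x : ℝ) : 1 - cos x = x ^ 2 / 2 * sinc (x / 2) ^ 2 := by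
  rcases eq_or_ne x 0 with rfl | hx
  · simp
  have h := cos_two_mul (x / 2)
  rw [mul_div_cancel₀ x two_ne_zero] at h
  rw [sinc_of_ne_zero (by positivity), h, ← sin_sq_add_cos_sq (x / 2)]
  field_simp
  ring

lemma Real.isEquivalent_arctan : arctan ~[𝓝 0] id := by
  simpa using! (hasDerivAt_arctan 0).isLittleO

noncomputable def triangularFactor (c x y : ℝ) : ℝ :=
  2 / 3 * (cos (c * x) + cos (c * (x / 2 + √3 / 2 * y)) + cos (c * (x / 2 - √3 / 2 * y)))

lemma tendsto_two_sub_triangularFactor_div_sq (c u v : ℝ) (huv : u ^ 2 + v ^ 2 = 1) :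
    Tendsto (fun t => (2 - triangularFactor c (t * u) (t * v)) / t ^ 2) (𝓝[≠] 0)
      (𝓝 (c ^ 2 / 2)) := by
  set w := u / 2 + √3 / 2 * v
  set w' := u / 2 - √3 / 2 * v
  let g : ℝ → ℝ := fun t => c ^ 2 / 3 *
    (u ^ 2 * sinc (c * t * u / 2) ^ 2 + w ^ 2 * sinc (c * t * w / 2) ^ 2
      + w' ^ 2 * sinc (c * t * w' / 2) ^ 2)
  have hg : ∀ t, 2 - triangularFactor c (t * u) (t * v) = t ^ 2 * g t := by
    intro t
    have h := one_sub_cos_eq_sq_mul_sinc_sq (c * t * u)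
    have h' := one_sub_cos_eq_sq_mul_sinc_sq (c * t * w)
    have h'' := one_sub_cos_eq_sq_mul_sinc_sq (c * t * w')
    unfold triangularFactor
    rw [show c * (t * u) = c * t * u by ring,
      show c * (t * u / 2 + √3 / 2 * (t * v)) = c * t * w by ring,
      show c * (t * u / 2 - √3 / 2 * (t * v)) = c * t * w' by ring]
    linear_combination (2 / 3 : ℝ) * (h + h' + h'')
  have hg0 : g 0 = c ^ 2 / 2 := by
    have h3 : √3 ^ 2 = 3 := sq_sqrt (by norm_num)
    simp only [g, mul_zero, zero_mul, zero_div, sinc_zero, w, w']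
    linear_combination (c ^ 2 * v ^ 2 / 6) * h3 + (c ^ 2 / 2) * huv
  have hgc : Continuous g := by fun_prop
  rw [← hg0]
  refine (hgc.tendsto 0).mono_left nhdsWithin_le_nhds |>.congr' ?_
  filter_upwards [self_mem_nhdsWithin] with t ht
  rw [hg, mul_div_cancel_left₀ _ (pow_ne_zero 2 ht)]

lemma tendsto_arctan_sqrt_four_sub_sq_div_div_self {f : ℝ → ℝ} {a : ℝ}
    (hf : Tendsto (fun t => (2 - f t) / t ^ 2) (𝓝[>] 0) (𝓝 a)) :
    Tendsto (fun t => arctan (√(4 - f t ^ 2) / f t) / t) (𝓝[>] 0) (𝓝 √a) := by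
  have ht : Tendsto (fun t : ℝ => t) (𝓝[>] 0) (𝓝 0) :=
    tendsto_nhdsWithin_of_tendsto_nhds tendsto_id
  have hf2 : Tendsto f (𝓝[>] 0) (𝓝 2) := by
    have h := (tendsto_const_nhds (x := (2 : ℝ))).sub ((ht.pow 2).mul hf)
    rw [zero_pow two_ne_zero, zero_mul, sub_zero] at h
    refine h.congr' ?_
    filter_upwards [self_mem_nhdsWithin] with t (ht : 0 < t)
    field_simp
    ring
  set X : ℝ → ℝ := fun t => √(4 - f t ^ 2) / f t
  have hXt : Tendsto (fun t => X t / t) (𝓝[>] 0) (𝓝 √a) := by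
    have h := ((hf.mul ((tendsto_const_nhds (x := (2 : ℝ))).add hf2)).sqrt).div hf2 two_ne_zero
    rw [show a * (2 + 2) = 2 ^ 2 * a by ring, sqrt_mul (by norm_num), sqrt_sq zero_le_two,
      mul_div_cancel_left₀ _ two_ne_zero] at h
    refine h.congr' ?_
    filter_upwards [self_mem_nhdsWithin] with t (ht : 0 < t)
    simp only [Pi.div_apply, X]
    rw [show (2 - f t) / t ^ 2 * (2 + f t) = (4 - f t ^ 2) / t ^ 2 by ring,
      sqrt_div' _ (sq_nonneg t), sqrt_sq ht.le, div_right_comm]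
  have hX : Tendsto X (𝓝[>] 0) (𝓝 0) := by
    have h := ht.mul hXt
    rw [zero_mul] at h
    refine h.congr' ?_
    filter_upwards [self_mem_nhdsWithin] with t (ht : 0 < t)
    field_simp
  have hequiv : (fun t => arctan (X t) / t) ~[𝓝[>] 0] fun t => X t / t :=
    (isEquivalent_arctan.comp_tendsto hX).div IsEquivalent.refl
  exact hequiv.symm.tendsto_nhds hXt

/-- Under critical sampling of a signal with circular spatial band of radius `B`
(reference square length `D = 1/(2B)`, triangular critical length `D_t = 1/(√3·B)`),
the dc dispersion ratio of the triangular waveguide mesh is `k̃_t(0) = √2/√3`: along any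
unit direction `(u, v)`, the corrected dispersion ratio tends to `√2/√3` as the spatial
frequency tends to `0⁺`. -/
theorem stmt18 (B u v : ℝ) (hB : 0 < B) (huv : u ^ 2 + v ^ 2 = 1)
    (D Dt : ℝ) (hD : D = 1 / (2 * B)) (hDt : Dt = 1 / (Real.sqrt 3 * B))
    (b : ℝ → ℝ → ℝ)
    (hb : ∀ ξx ξy, b ξx ξy = (2 / 3) * (Real.cos (2 * π * Dt * ξx) +
      Real.cos (2 * π * Dt * (ξx / 2 + Real.sqrt 3 / 2 * ξy)) +
      Real.cos (2 * π * Dt * (ξx / 2 - Real.sqrt 3 / 2 * ξy)))) :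
    Filter.Tendsto (fun t : ℝ => (1 / (2 * π * D * t)) *
        Real.arctan (Real.sqrt (4 - (b (t * u) (t * v)) ^ 2) / b (t * u) (t * v)))
      (nhdsWithin 0 (Set.Ioi 0)) (nhds (Real.sqrt 2 / Real.sqrt 3)) := by
  obtain rfl : b = triangularFactor (2 * π * Dt) := funext₂ hb
  have hfactor := (tendsto_two_sub_triangularFactor_div_sq (2 * π * Dt) u v huv).mono_left
    (nhdsGT_le_nhdsNE 0)
  have hlim := (tendsto_arctan_sqrt_four_sub_sq_div_div_self hfactor).const_mul (1 / (2 * π * D))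
  have hval : 1 / (2 * π * D) * √((2 * π * Dt) ^ 2 / 2) = √2 / √3 := by
    have hDt_pos : 0 < Dt := by rw [hDt]; positivity
    rw [sqrt_div (sq_nonneg _), sqrt_sq (by positivity), hD, hDt]
    field_simp
    rw [sq_sqrt zero_le_two]
  rw [hval] at hlim
  refine hlim.congr fun t => ?_
  ring
end
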